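/- The r-Stirling number of the second kind satisfies S2_r(n,k) = Σ_{j=k}^n S2(n,j) · C(j,k) · r^{(j−k)↓} for integer r ≥ 0, where r^{m↓} is the falling factorial. -/

import Mathlib

open Polynomial Finset

/-- The Stirling number of the second kind. -/
def stirling2 : ℕ → ℕ → ℕ
  | 0, 0 => 1
  | 0, _ + 1 => 0
  | _ + 1, 0 => 0
  | n + 1, k + 1 => (k + 1) * stirling2 n (k + 1) + stirling2 n k

/-- The forward finite difference operator `(Δ f)(r) = f (r+1) - f r`. -/
def fdiff (f : ℝ → ℝ) : ℝ → ℝ := fun r => f (r + 1) - f r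

/-- The `r`-Stirling number of the second kind, `(1/k!) Δ^k (r^n)`. -/
noncomputable def S2r (r : ℝ) (n k : ℕ) : ℝ :=
  (1 / (k.factorial : ℝ)) * (fdiff^[k] (fun x : ℝ => x ^ n)) r

/-! Expanding `x ^ n = ∑ⱼ S2(n,j) x^{j↓}` in falling factorials, the forward difference acts on
`x^{j↓}` like a derivative, `Δ x^{j↓} = j x^{(j-1)↓}`, so `Δ^k x^{j↓} = k! C(j,k) x^{(j-k)↓}`. -/

open fwdDiff

theorem stirling2_eq_stirlingSecond : ∀ n k, stirling2 n k = Nat.stirlingSecond n k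
  | 0, 0 | 0, _ + 1 | _ + 1, 0 => rfl
  | n + 1, k + 1 => by
    rw [stirling2, Nat.stirlingSecond_succ_succ, stirling2_eq_stirlingSecond n (k + 1),
      stirling2_eq_stirlingSecond n k]

section

variable (R : Type*) [CommRing R]

theorem X_mul_descPochhammer (j : ℕ) :
    X * descPochhammer R j = descPochhammer R (j + 1) + (j : R[X]) * descPochhammer R j := by
  rw [descPochhammer_succ_right]
  ring

theorem X_pow_eq_sum_stirlingSecond_mul_descPochhammer (n : ℕ) :
    (X : R[X]) ^ n = ∑ j ∈ range (n + 1), (Nat.stirlingSecond n j : R[X]) * descPochhammer R j := by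
  induction n with
  | zero => simp
  | succ n ih =>
    calc (X : R[X]) ^ (n + 1)
        = ∑ j ∈ range (n + 1), (Nat.stirlingSecond n j : R[X]) * descPochhammer R (j + 1)
          + ∑ j ∈ range (n + 1), (j * Nat.stirlingSecond n j : R[X]) * descPochhammer R j := by
          rw [pow_succ', ih, mul_sum, ← sum_add_distrib]
          refine sum_congr rfl fun j _ => ?_
          rw [mul_left_comm, X_mul_descPochhammer]
          ring
      _ = ∑ j ∈ range (n + 1), (Nat.stirlingSecond n j : R[X]) * descPochhammer R (j + 1)
          + ∑ j ∈ range (n + 1),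
              ((j + 1) * Nat.stirlingSecond n (j + 1) : R[X]) * descPochhammer R (j + 1) := by
          congr 1
          rw [sum_range_succ', sum_range_succ, Nat.stirlingSecond_eq_zero_of_lt n.lt_succ_self]
          simp
      _ = ∑ j ∈ range (n + 2), (Nat.stirlingSecond (n + 1) j : R[X]) * descPochhammer R j := by
          rw [sum_range_succ' _ (n + 1), ← sum_add_distrib]
          simp only [Nat.stirlingSecond_succ_succ, Nat.stirlingSecond_succ_zero]
          push_cast
          simp only [zero_mul, add_zero]
          refine sum_congr rfl fun j _ => ?_
          ring

theorem descPochhammer_succ_eval_add_one (j : ℕ) (x : R) :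
    (descPochhammer R (j + 1)).eval (x + 1) = (x + 1) * (descPochhammer R j).eval x := by
  rw [descPochhammer_succ_left, eval_mul, eval_X, eval_comp, eval_sub, eval_X, eval_one,
    add_sub_cancel_right]

theorem fwdDiff_descPochhammer_eval (j : ℕ) :
    Δ_[1] (fun x : R => (descPochhammer R j).eval x)
      = j • fun x => (descPochhammer R (j - 1)).eval x := by
  funext x
  cases j with
  | zero => simp [fwdDiff]
  | succ j =>
    rw [fwdDiff, descPochhammer_succ_eval_add_one, descPochhammer_succ_eval, Pi.smul_apply,
      add_tsub_cancel_right, nsmul_eq_mul]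
    push_cast
    ring

theorem fwdDiff_iter_descPochhammer_eval (k j : ℕ) :
    (Δ_[1])^[k] (fun x : R => (descPochhammer R j).eval x)
      = j.descFactorial k • fun x => (descPochhammer R (j - k)).eval x := by
  induction k with
  | zero => simp
  | succ k ih =>
    rw [Function.iterate_succ_apply', ih, fwdDiff_const_smul, fwdDiff_descPochhammer_eval,
      smul_smul, Nat.descFactorial_succ, mul_comm, Nat.sub_sub]

end

theorem fdiff_eq_fwdDiff_one : fdiff = Δ_[1] := rfl

theorem rStirling_second_as_falling_sum (r : ℕ) (n k : ℕ) :
    S2r (r : ℝ) n k =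
      ∑ j ∈ Finset.Icc k n,
        (stirling2 n j : ℝ) * (j.choose k : ℝ) * (descPochhammer ℝ (j - k)).eval (r : ℝ) := by
  have hpow : (fun x : ℝ => x ^ n)
      = ∑ j ∈ range (n + 1), Nat.stirlingSecond n j • fun x : ℝ => (descPochhammer ℝ j).eval x := by
    funext x
    simpa [eval_finsetSum, nsmul_eq_mul] using
      congrArg (eval x) (X_pow_eq_sum_stirlingSecond_mul_descPochhammer ℝ n)
  have hdiff : (fdiff^[k] fun x : ℝ => x ^ n) r = ∑ j ∈ range (n + 1), (k.factorial : ℝ) *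
      ((stirling2 n j : ℝ) * (j.choose k : ℝ) * (descPochhammer ℝ (j - k)).eval (r : ℝ)) := by
    rw [fdiff_eq_fwdDiff_one, hpow, fwdDiff_iter_finsetSum, Finset.sum_apply]
    refine sum_congr rfl fun j _ => ?_
    rw [fwdDiff_iter_const_smul, fwdDiff_iter_descPochhammer_eval, smul_smul, Pi.smul_apply,
      Nat.descFactorial_eq_factorial_mul_choose, stirling2_eq_stirlingSecond, nsmul_eq_mul]
    push_cast
    ring
  have hsupp : Icc k n ⊆ range (n + 1) := fun j hj =>
    mem_range.2 (Nat.lt_succ_of_le (mem_Icc.1 hj).2)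
  rw [S2r, hdiff, ← mul_sum, one_div, inv_mul_cancel_left₀ (by positivity)]
  refine (sum_subset hsupp fun j _ hj => ?_).symm
  rw [Nat.choose_eq_zero_of_lt (by simp_all)]
  simp
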